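/- arXiv:2305.16583 — 4 statements merged into one kernel-verified Lean document; each statement's English description precedes it below -/
import Mathlib

section
/- Let Z and Z' be independent standard normal random variables and let a be a nonzero real number. Then P(|Z| < |Z' + a|) > 1/2. -/
open MeasureTheory ProbabilityTheory
open scoped ENNReal NNReal

/-!
Let `X, Y` be independent with a law `ν` on `ℝ` that is symmetric, and let `a ≠ 0`. The maps
`(x, y) ↦ (x, -y)` and `(x, y) ↦ (y, x)` preserve `ν ⊗ ν`, so the four pairs
`(|x|, |y + a|)`, `(|x|, |y - a|)`, `(|y|, |x + a|)`, `(|y|, |x - a|)` all have the law of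
`(|X|, |Y + a|)`. A finite case analysis shows that at every point at least as many of these
pairs `(s, t)` have `s < t` as have `t < s`, with four to spare when `max |x| |y| < |a| / 2`.
Integrating, `P(|Y + a| < |X|) + P(max |X| |Y| < |a| / 2) ≤ P(|X| < |Y + a|)`. The middle term
is positive when `0` lies in the support of `ν`, and ties `|X| = |Y + a|` are null when `ν` has
no atoms, so `P(|X| < |Y + a|) > 1 / 2`.
-/

lemma abs_add_abs_sub_cases (y a : ℝ) :
    (|y + a| = |y| + |a| ∧ |y - a| = |(|y| - |a|)|) ∨
      (|y + a| = |(|y| - |a|)| ∧ |y - a| = |y| + |a|) := by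
  rcases le_total 0 y with hy | hy <;> rcases le_total 0 a with ha | ha
  · exact .inl ⟨by rw [abs_of_nonneg hy, abs_of_nonneg ha, abs_of_nonneg (by linarith)],
      by rw [abs_of_nonneg hy, abs_of_nonneg ha]⟩
  · exact .inr ⟨by rw [abs_of_nonneg hy, abs_of_nonpos ha, sub_neg_eq_add],
      by rw [abs_of_nonneg hy, abs_of_nonpos ha, abs_of_nonneg (by linarith)]; ring⟩
  · exact .inr ⟨by rw [abs_of_nonpos hy, abs_of_nonneg ha, ← abs_neg]; ring_nf,
      by rw [abs_of_nonpos hy, abs_of_nonneg ha, abs_of_nonpos (by linarith)]; ring⟩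
  · exact .inl ⟨by rw [abs_of_nonpos hy, abs_of_nonpos ha, abs_of_nonpos (by linarith)]; ring,
      by rw [abs_of_nonpos hy, abs_of_nonpos ha, ← abs_neg]; ring_nf⟩

lemma comparison_count_le_of_nonneg {u v b : ℝ} (hu : 0 ≤ u) (hv : 0 ≤ v) (hb : 0 < b) :
    ((if v + b < u then 1 else 0) + (if |v - b| < u then 1 else 0)
      + (if u + b < v then 1 else 0) + (if |u - b| < v then 1 else 0)
      + 4 * (if max u v < b / 2 then 1 else 0) : ℕ)
    ≤ (if u < v + b then 1 else 0) + (if u < |v - b| then 1 else 0)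
      + (if v < u + b then 1 else 0) + (if v < |u - b| then 1 else 0) := by
  wlog huv : u ≤ v generalizing u v
  · have := this hv hu (le_of_not_ge huv)
    rw [max_comm] at this
    linarith
  rw [max_eq_right huv, if_neg (show ¬v + b < u by linarith),
    if_pos (show u < v + b by linarith)]
  rcases le_total b u with hbu | hub
  · rw [abs_of_nonneg (by linarith : 0 ≤ u - b), abs_of_nonneg (by linarith : 0 ≤ v - b)]
    split_ifs <;> first | omega | (exfalso; linarith)
  rcases le_total b v with hbv | hvb
  · rw [abs_of_nonpos (by linarith : u - b ≤ 0), abs_of_nonneg (by linarith : 0 ≤ v - b)]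
    split_ifs <;> first | omega | (exfalso; linarith)
  · rw [abs_of_nonpos (by linarith : u - b ≤ 0), abs_of_nonpos (by linarith : v - b ≤ 0)]
    split_ifs <;> first | omega | (exfalso; linarith)

lemma comparison_count_le (x y a : ℝ) (ha : a ≠ 0) :
    ((if |y + a| < |x| then 1 else 0) + (if |y - a| < |x| then 1 else 0)
      + (if |x + a| < |y| then 1 else 0) + (if |x - a| < |y| then 1 else 0)
      + 4 * (if max |x| |y| < |a| / 2 then 1 else 0) : ℕ)
    ≤ (if |x| < |y + a| then 1 else 0) + (if |x| < |y - a| then 1 else 0)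
      + (if |y| < |x + a| then 1 else 0) + (if |y| < |x - a| then 1 else 0) := by
  have h := comparison_count_le_of_nonneg (abs_nonneg x) (abs_nonneg y) (abs_pos.mpr ha)
  rcases abs_add_abs_sub_cases y a with ⟨hy₁, hy₂⟩ | ⟨hy₁, hy₂⟩ <;>
    rcases abs_add_abs_sub_cases x a with ⟨hx₁, hx₂⟩ | ⟨hx₁, hx₂⟩ <;>
    rw [hy₁, hy₂, hx₁, hx₂] <;> linarith

/-- Residual scores of a benign point and of a point corrupted by the error `a`. -/
def scores (a : ℝ) (p : ℝ × ℝ) : ℝ × ℝ := (|p.1|, |p.2 + a|)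

lemma measurable_scores (a : ℝ) : Measurable (scores a) :=
  measurable_fst.abs.prodMk (measurable_snd.add_const a).abs

def scoreMaps (a : ℝ) : Fin 4 → ℝ × ℝ → ℝ × ℝ :=
  ![scores a, scores (-a), scores a ∘ Prod.swap, scores (-a) ∘ Prod.swap]

lemma measurable_scoreMaps (a : ℝ) (i : Fin 4) : Measurable (scoreMaps a i) := by
  fin_cases i
  exacts [measurable_scores a, measurable_scores (-a), (measurable_scores a).comp measurable_swap,
    (measurable_scores (-a)).comp measurable_swap]

lemma sum_indicator_scoreMaps_le (a : ℝ) (ha : a ≠ 0) (p : ℝ × ℝ) :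
    ∑ i, {q : ℝ × ℝ | q.2 < q.1}.indicator 1 (scoreMaps a i p)
        + 4 * (Metric.ball 0 (|a| / 2)).indicator (1 : ℝ × ℝ → ℝ≥0∞) p
      ≤ ∑ i, {q : ℝ × ℝ | q.1 < q.2}.indicator (1 : ℝ × ℝ → ℝ≥0∞) (scoreMaps a i p) := by
  classical
  have h := comparison_count_le p.1 p.2 a ha
  simp only [Fin.sum_univ_four, scoreMaps, Matrix.cons_val, Function.comp_apply, scores,
    Prod.fst_swap, Prod.snd_swap, Set.indicator_apply, Set.mem_ofPred_eq, Pi.one_apply,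
    mem_ball_zero_iff, Prod.norm_def, Real.norm_eq_abs, ← sub_eq_add_neg]
  exact_mod_cast h

lemma half_lt_of_add_eq_one_of_lt {x y : ℝ≥0∞} (hxy : x + y = 1) (h : y < x) : 1 / 2 < x := by
  have hx : x ≠ ∞ := ne_top_of_le_ne_top ENNReal.one_ne_top (hxy ▸ le_self_add)
  rw [ENNReal.div_lt_iff (.inl two_ne_zero) (.inl ENNReal.ofNat_ne_top), ← hxy, mul_two]
  exact ENNReal.add_lt_add_left hx h

lemma map_prod_self_comp_swap {α β : Type*} [MeasurableSpace α] [MeasurableSpace β]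
    {μ : Measure α} [SFinite μ] {f : α × α → β} (hf : Measurable f) :
    (μ.prod μ).map (f ∘ Prod.swap) = (μ.prod μ).map f := by
  rw [← Measure.map_map hf measurable_swap, Measure.prod_swap]

section Symmetric

variable {ν : Measure ℝ}

lemma map_scores_neg [SFinite ν] [ν.IsNegInvariant] (a : ℝ) :
    (ν.prod ν).map (scores (-a)) = (ν.prod ν).map (scores a) := by
  have hneg : MeasurePreserving (Prod.map id Neg.neg) (ν.prod ν) (ν.prod ν) :=
    (MeasurePreserving.id ν).prod (Measure.measurePreserving_neg ν)
  have hcomp : scores (-a) = scores a ∘ Prod.map id Neg.neg := by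
    funext p
    simp only [scores, Function.comp_apply, Prod.map_fst, Prod.map_snd, id_eq, neg_add_eq_sub,
      ← sub_eq_add_neg, abs_sub_comm]
  rw [hcomp, ← Measure.map_map (measurable_scores a) hneg.measurable, hneg.map_eq]

lemma map_scoreMaps [SFinite ν] [ν.IsNegInvariant] (a : ℝ) (i : Fin 4) :
    (ν.prod ν).map (scoreMaps a i) = (ν.prod ν).map (scores a) := by
  fin_cases i
  · rfl
  · exact map_scores_neg a
  · exact map_prod_self_comp_swap (measurable_scores a)
  · exact (map_prod_self_comp_swap (measurable_scores (-a))).trans (map_scores_neg a)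

lemma lintegral_sum_indicator_scoreMaps [SFinite ν] [ν.IsNegInvariant] (a : ℝ) {s : Set (ℝ × ℝ)}
    (hs : MeasurableSet s) :
    ∫⁻ p, ∑ i, s.indicator 1 (scoreMaps a i p) ∂(ν.prod ν) = 4 * (ν.prod ν).map (scores a) s := by
  have hind : Measurable (s.indicator (1 : ℝ × ℝ → ℝ≥0∞)) := measurable_one.indicator hs
  rw [lintegral_finsetSum (f := fun i p ↦ s.indicator 1 (scoreMaps a i p)) _
    fun i _ ↦ hind.comp (measurable_scoreMaps a i)]
  simp_rw [← lintegral_map hind (measurable_scoreMaps a _), map_scoreMaps,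
    lintegral_indicator_one hs]
  simp

theorem map_scores_gt_lt_map_scores_lt [IsFiniteMeasure ν] [ν.IsNegInvariant] {a : ℝ} (ha : a ≠ 0)
    (h0 : 0 ∈ ν.support) :
    (ν.prod ν).map (scores a) {q | q.2 < q.1} < (ν.prod ν).map (scores a) {q | q.1 < q.2} := by
  have hA : MeasurableSet {q : ℝ × ℝ | q.1 < q.2} := measurableSet_lt'
  have hB : MeasurableSet {q : ℝ × ℝ | q.2 < q.1} := measurableSet_lt measurable_snd measurable_fst
  have hP : MeasurableSet (Metric.ball (0 : ℝ × ℝ) (|a| / 2)) := Metric.isOpen_ball.measurableSet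
  have key := lintegral_mono (μ := ν.prod ν) (sum_indicator_scoreMaps_le a ha)
  have hmeas : Measurable fun p ↦ ∑ i, {q : ℝ × ℝ | q.2 < q.1}.indicator (1 : ℝ × ℝ → ℝ≥0∞)
      (scoreMaps a i p) :=
    Finset.measurable_sum _ fun i _ ↦ (measurable_one.indicator hB).comp (measurable_scoreMaps a i)
  rw [lintegral_add_left hmeas,
    lintegral_const_mul _ (measurable_one.indicator hP), lintegral_indicator_one hP,
    lintegral_sum_indicator_scoreMaps a hB, lintegral_sum_indicator_scoreMaps a hA, ← mul_add,
    ENNReal.mul_le_mul_iff_right (by norm_num) (by norm_num)] at key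
  refine (ENNReal.lt_add_right (measure_ne_top _ _) ?_).trans_le key
  rw [← Prod.mk_zero_zero, ← ball_prod_same, Measure.prod_prod]
  have hball := (Measure.mem_support_iff_forall 0).mp h0 _
    (Metric.ball_mem_nhds 0 (half_pos (abs_pos.mpr ha)))
  exact mul_ne_zero hball.ne' hball.ne'

lemma map_scores_diagonal [SFinite ν] [NullSingletonClass ν] (a : ℝ) :
    (ν.prod ν).map (scores a) {q | q.1 = q.2} = 0 := by
  have hD : MeasurableSet {q : ℝ × ℝ | q.1 = q.2} :=
    measurableSet_eq_fun measurable_fst measurable_snd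
  rw [Measure.map_apply (measurable_scores a) hD,
    Measure.measure_prod_null ((measurable_scores a) hD)]
  refine Filter.Eventually.of_forall fun x ↦ ?_
  have hfin : (Prod.mk x ⁻¹' (scores a ⁻¹' {q | q.1 = q.2})).Finite := by
    refine (Set.toFinite {x - a, -x - a}).subset fun y hy ↦ ?_
    simp only [Set.mem_preimage, scores, Set.mem_ofPred_eq] at hy
    rcases abs_eq_abs.mp hy with h | h
    · exact .inl (by linarith)
    · exact .inr (by simp only [Set.mem_singleton_iff]; linarith)
  exact hfin.measure_zero ν

theorem half_lt_measure_abs_lt_abs_add [IsProbabilityMeasure ν] [ν.IsNegInvariant]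
    [NullSingletonClass ν] {a : ℝ} (ha : a ≠ 0) (h0 : 0 ∈ ν.support) :
    1 / 2 < (ν.prod ν) {p | |p.1| < |p.2 + a|} := by
  have hA : MeasurableSet {q : ℝ × ℝ | q.1 < q.2} := measurableSet_lt'
  have hB : MeasurableSet {q : ℝ × ℝ | q.2 < q.1} := measurableSet_lt measurable_snd measurable_fst
  have hD : MeasurableSet {q : ℝ × ℝ | q.1 = q.2} :=
    measurableSet_eq_fun measurable_fst measurable_snd
  set η := (ν.prod ν).map (scores a)
  have : IsProbabilityMeasure η :=
    Measure.isProbabilityMeasure_map (measurable_scores a).aemeasurable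
  have hunion : {q : ℝ × ℝ | q.1 < q.2} ∪ {q | q.2 < q.1} = {q | q.1 = q.2}ᶜ := by
    ext q
    exact lt_or_lt_iff_ne (α := ℝ)
  have hdisj : Disjoint {q : ℝ × ℝ | q.1 < q.2} {q | q.2 < q.1} :=
    Set.disjoint_left.mpr fun q (h₁ : q.1 < q.2) (h₂ : q.2 < q.1) ↦ lt_asymm h₁ h₂
  have hsum : η {q | q.1 < q.2} + η {q | q.2 < q.1} = 1 :=
    calc η {q | q.1 < q.2} + η {q | q.2 < q.1}
        = η ({q | q.1 < q.2} ∪ {q | q.2 < q.1}) :=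
          (measure_union hdisj hB).symm
      _ = 1 := by rw [hunion, prob_compl_eq_one_sub hD, map_scores_diagonal, tsub_zero]
  have hgoal : (ν.prod ν) {p | |p.1| < |p.2 + a|} = η {q | q.1 < q.2} :=
    (Measure.map_apply (measurable_scores a) hA).symm
  exact hgoal ▸ half_lt_of_add_eq_one_of_lt hsum (map_scores_gt_lt_map_scores_lt ha h0)

end Symmetric

instance isNegInvariant_gaussianReal_zero (v : ℝ≥0) : (gaussianReal 0 v).IsNegInvariant :=
  ⟨by simpa [Measure.neg_def] using gaussianReal_map_neg (μ := 0) (v := v)⟩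

lemma support_gaussianReal (μ : ℝ) {v : ℝ≥0} (hv : v ≠ 0) : (gaussianReal μ v).support = Set.univ :=
  have := (gaussianReal_absolutelyContinuous' μ hv).isOpenPosMeasure
  Measure.support_eq_univ

/-- If `Z` and `Z'` are independent standard normal random variables and `a ≠ 0`,
then `P(|Z| < |Z' + a|) > 1/2`. -/
theorem stmt_1 {Ω : Type*} [MeasurableSpace Ω] (μ : Measure Ω) [IsProbabilityMeasure μ]
    (Z Z' : Ω → ℝ) (hZ : Measurable Z) (hZ' : Measurable Z')
    (hZlaw : Measure.map Z μ = gaussianReal 0 1)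
    (hZ'law : Measure.map Z' μ = gaussianReal 0 1)
    (hindep : IndepFun Z Z' μ) (a : ℝ) (ha : a ≠ 0) :
    1 / 2 < μ {ω | |Z ω| < |Z' ω + a|} := by
  have hpair : μ.map (fun ω ↦ (Z ω, Z' ω)) = (gaussianReal 0 1).prod (gaussianReal 0 1) := by
    simpa only [hZlaw, hZ'law] using
      (indepFun_iff_map_prod_eq_prod_map_map hZ.aemeasurable hZ'.aemeasurable).mp hindep
  have := nullSingletonClass_gaussianReal (μ := 0) one_ne_zero
  have h := half_lt_measure_abs_lt_abs_add ha
    (support_gaussianReal 0 one_ne_zero ▸ Set.mem_univ 0)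
  rwa [← hpair, Measure.map_apply (hZ.prodMk hZ')
    (measurableSet_lt measurable_fst.abs (measurable_snd.add_const a).abs)] at h
end

section
/- Let X and Y be independent real-valued random variables with cumulative distribution functions F and G respectively. If F(t) ≥ G(t) for all t ∈ ℝ (i.e. Y first-order stochastically dominates X) and G is continuous, then P(X ≤ Y) ≥ 1/2. -/
open MeasureTheory ProbabilityTheory
open scoped ENNReal

lemma half_le_prod_le (ρ : Measure ℝ) [IsProbabilityMeasure ρ] :
    1 / 2 ≤ (ρ.prod ρ) {p : ℝ × ℝ | p.1 ≤ p.2} := by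
  have hA : MeasurableSet {p : ℝ × ℝ | p.1 ≤ p.2} :=
    measurableSet_le measurable_fst measurable_snd
  have hB : MeasurableSet {p : ℝ × ℝ | p.2 ≤ p.1} :=
    measurableSet_le measurable_snd measurable_fst
  have hswap : (ρ.prod ρ) {p : ℝ × ℝ | p.2 ≤ p.1} = (ρ.prod ρ) {p : ℝ × ℝ | p.1 ≤ p.2} := by
    have h1 : {p : ℝ × ℝ | p.2 ≤ p.1} = Prod.swap ⁻¹' {p : ℝ × ℝ | p.1 ≤ p.2} := rfl
    rw [h1, ← Measure.map_apply measurable_swap hA, Measure.prod_swap]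
  have hcover : (Set.univ : Set (ℝ × ℝ)) ⊆ {p : ℝ × ℝ | p.1 ≤ p.2} ∪ {p : ℝ × ℝ | p.2 ≤ p.1} := by
    intro p _
    exact le_total p.1 p.2
  have h1 : (1 : ℝ≥0∞) ≤ 2 * (ρ.prod ρ) {p : ℝ × ℝ | p.1 ≤ p.2} := by
    calc (1 : ℝ≥0∞) = (ρ.prod ρ) Set.univ := (measure_univ).symm
    _ ≤ (ρ.prod ρ) ({p : ℝ × ℝ | p.1 ≤ p.2} ∪ {p : ℝ × ℝ | p.2 ≤ p.1}) :=
        measure_mono hcover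
    _ ≤ (ρ.prod ρ) {p : ℝ × ℝ | p.1 ≤ p.2} + (ρ.prod ρ) {p : ℝ × ℝ | p.2 ≤ p.1} :=
        measure_union_le _ _
    _ = 2 * (ρ.prod ρ) {p : ℝ × ℝ | p.1 ≤ p.2} := by rw [hswap]; ring
  rw [ENNReal.div_le_iff_le_mul (by norm_num) (by norm_num)]
  calc (1 : ℝ≥0∞) ≤ 2 * (ρ.prod ρ) {p : ℝ × ℝ | p.1 ≤ p.2} := h1
  _ = (ρ.prod ρ) {p : ℝ × ℝ | p.1 ≤ p.2} * 2 := mul_comm _ _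

/-- If `Y` first-order stochastically dominates `X` (i.e. `F ≥ G` pointwise for their
CDFs `F` and `G`), `X` and `Y` are independent, and `G` is continuous, then
`P(X ≤ Y) ≥ 1/2`. -/
theorem stmt_7 {Ω : Type*} [MeasurableSpace Ω] (μ : Measure Ω) [IsProbabilityMeasure μ]
    (X Y : Ω → ℝ) (hX : Measurable X) (hY : Measurable Y)
    (hindep : IndepFun X Y μ)
    (hdom : ∀ t : ℝ, cdf (Measure.map Y μ) t ≤ cdf (Measure.map X μ) t)
    (hcont : Continuous fun t => cdf (Measure.map Y μ) t) :
    1 / 2 ≤ μ {ω | X ω ≤ Y ω} := by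
  set ν := Measure.map X μ with hν
  set ρ := Measure.map Y μ with hρ
  have hνP : IsProbabilityMeasure ν := Measure.isProbabilityMeasure_map hX.aemeasurable
  have hρP : IsProbabilityMeasure ρ := Measure.isProbabilityMeasure_map hY.aemeasurable
  have hA : MeasurableSet {p : ℝ × ℝ | p.1 ≤ p.2} :=
    measurableSet_le measurable_fst measurable_snd
  have hmap : μ.map (fun ω => (X ω, Y ω)) = ν.prod ρ :=
    (indepFun_iff_map_prod_eq_prod_map_map hX.aemeasurable hY.aemeasurable).mp hindep
  have h1 : μ {ω | X ω ≤ Y ω} = (ν.prod ρ) {p : ℝ × ℝ | p.1 ≤ p.2} := by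
    rw [← hmap, Measure.map_apply (hX.prodMk hY) hA]
    rfl
  rw [h1]
  -- dominance in terms of measures of Iic
  have hdom' : ∀ t : ℝ, ρ (Set.Iic t) ≤ ν (Set.Iic t) := by
    intro t
    rw [← ofReal_cdf ρ t, ← ofReal_cdf ν t]
    exact ENNReal.ofReal_le_ofReal (hdom t)
  have h2 : (ρ.prod ρ) {p : ℝ × ℝ | p.1 ≤ p.2} ≤ (ν.prod ρ) {p : ℝ × ℝ | p.1 ≤ p.2} := by
    rw [Measure.prod_apply_symm hA, Measure.prod_apply_symm hA]
    refine lintegral_mono fun y => ?_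
    have : (fun x => (x, y)) ⁻¹' {p : ℝ × ℝ | p.1 ≤ p.2} = Set.Iic y := rfl
    rw [this]
    exact hdom' y
  exact le_trans (half_le_prod_le ρ) h2
end

section
/- Let ε be a real-valued random variable admitting a density f that is nondecreasing on (−∞,0] and nonincreasing on [0,∞) (unimodal with mode 0). Then the cumulative distribution function of |ε|, i.e. the map x ↦ P(|ε| ≤ x), is concave on [0,∞). -/
/-!
Folding the density about the origin, `P(|ε| ≤ x) = ∫₀ˣ (f t + f (-t)) dt` for `x ≥ 0`, and
unimodality makes the folded density `t ↦ f t + f (-t)` nonincreasing on `[0, ∞)`. An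
integral `x ↦ ∫ₐˣ g` of a nonincreasing `g` is concave, since its slope over `[x, y]` is at
least `g y` and its slope over `[y, z]` is at most `g y`.
-/

open MeasureTheory Set

theorem antitoneOn_add_comp_neg_Ici {f : ℝ → ℝ} (hmono : MonotoneOn f (Iic 0))
    (hanti : AntitoneOn f (Ici 0)) :
    AntitoneOn (fun t => f t + f (-t)) (Ici 0) := by
  intro a ha b hb hab
  have hpos : f b ≤ f a := hanti ha hb hab
  have hneg : f (-b) ≤ f (-a) :=
    hmono (by simpa using hb) (by simpa using ha) (neg_le_neg hab)
  exact add_le_add hpos hneg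

theorem AntitoneOn.concaveOn_intervalIntegral {g : ℝ → ℝ} {s : Set ℝ} {a : ℝ}
    (hs : Convex ℝ s) (ha : a ∈ s) (hg : AntitoneOn g s) :
    ConcaveOn ℝ s fun x => ∫ t in a..x, g t := by
  have hint : ∀ x ∈ s, ∀ y ∈ s, IntervalIntegrable g volume x y := fun x hx y hy =>
    (hg.mono (hs.ordConnected.uIcc_subset hx hy)).intervalIntegrable
  refine concaveOn_of_slope_anti_adjacent hs fun {x y z} hx hz hxy hyz => ?_
  have hy : y ∈ s := hs.ordConnected.out hx hz ⟨hxy.le, hyz.le⟩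
  rw [intervalIntegral.integral_interval_sub_left (hint a ha z hz) (hint a ha y hy),
    intervalIntegral.integral_interval_sub_left (hint a ha y hy) (hint a ha x hx)]
  have hupper : ∫ t in y..z, g t ≤ (z - y) * g y := by
    simpa using intervalIntegral.integral_mono_on hyz.le (hint y hy z hz)
      intervalIntegrable_const fun t ht =>
        hg hy (hs.ordConnected.out hy hz ht) ht.1
  have hlower : (y - x) * g y ≤ ∫ t in x..y, g t := by
    simpa using intervalIntegral.integral_mono_on hxy.le intervalIntegrable_const
      (hint x hx y hy) fun t ht => hg (hs.ordConnected.out hx hy ht) hy ht.2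
  calc (∫ t in y..z, g t) / (z - y) ≤ g y := (div_le_iff₀ (sub_pos.2 hyz)).2 (by linarith)
    _ ≤ (∫ t in x..y, g t) / (y - x) := (le_div_iff₀ (sub_pos.2 hxy)).2 (by linarith)

section Density

variable {Ω : Type*} [MeasurableSpace Ω] {μ : Measure Ω} {ε : Ω → ℝ} {f : ℝ → ℝ}

theorem integrable_of_map_eq_withDensity_ofReal [IsFiniteMeasure μ] (hfmeas : Measurable f)
    (hfnonneg : ∀ x, 0 ≤ f x)
    (hdensity : Measure.map ε μ = volume.withDensity fun x => ENNReal.ofReal (f x)) :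
    Integrable f := by
  refine (lintegral_ofReal_ne_top_iff_integrable hfmeas.aestronglyMeasurable
    (Filter.Eventually.of_forall hfnonneg)).1 ?_
  rw [← setLIntegral_univ, ← withDensity_apply _ MeasurableSet.univ, ← hdensity]
  exact measure_ne_top _ _

theorem toReal_measure_abs_le_eq_intervalIntegral [IsFiniteMeasure μ] (hε : Measurable ε)
    (hfmeas : Measurable f) (hfnonneg : ∀ x, 0 ≤ f x)
    (hdensity : Measure.map ε μ = volume.withDensity fun x => ENNReal.ofReal (f x))
    {x : ℝ} (hx : 0 ≤ x) :
    (μ {ω | |ε ω| ≤ x}).toReal = ∫ t in (0 : ℝ)..x, (f t + f (-t)) := by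
  have hf : Integrable f := integrable_of_map_eq_withDensity_ofReal hfmeas hfnonneg hdensity
  have hset : {ω | |ε ω| ≤ x} = ε ⁻¹' Icc (-x) x := by
    ext ω
    simp [abs_le]
  rw [hset, ← Measure.map_apply hε measurableSet_Icc, hdensity,
    withDensity_apply _ measurableSet_Icc, ← integral_eq_lintegral_of_nonneg_ae
      (Filter.Eventually.of_forall hfnonneg) hfmeas.aestronglyMeasurable,
    integral_Icc_eq_integral_Ioc, ← intervalIntegral.integral_of_le (by linarith),
    ← intervalIntegral.integral_add_adjacent_intervals (b := 0) hf.intervalIntegrable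
      hf.intervalIntegrable, intervalIntegral.integral_add hf.intervalIntegrable
      hf.comp_neg.intervalIntegrable, intervalIntegral.integral_comp_neg, neg_zero, add_comm]

end Density

/-- If `ε` admits a density `f` (w.r.t. Lebesgue measure) that is nondecreasing on
`(-∞,0]` and nonincreasing on `[0,∞)` (unimodal with mode 0), then the CDF of `|ε|`,
i.e. `x ↦ P(|ε| ≤ x)`, is concave on `[0,∞)`. -/
theorem stmt_8 {Ω : Type*} [MeasurableSpace Ω] (μ : Measure Ω) [IsProbabilityMeasure μ]
    (ε : Ω → ℝ) (hε : Measurable ε)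
    (f : ℝ → ℝ) (hfmeas : Measurable f) (hfnonneg : ∀ x, 0 ≤ f x)
    (hdensity : Measure.map ε μ = volume.withDensity fun x => ENNReal.ofReal (f x))
    (hmono : MonotoneOn f (Iic 0)) (hanti : AntitoneOn f (Ici 0)) :
    ConcaveOn ℝ (Ici 0) fun x => (μ {ω | |ε ω| ≤ x}).toReal := by
  have hconcave : ConcaveOn ℝ (Ici 0) fun x => ∫ t in (0 : ℝ)..x, (f t + f (-t)) :=
    (antitoneOn_add_comp_neg_Ici hmono hanti).concaveOn_intervalIntegral (convex_Ici 0)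
      self_mem_Ici
  refine hconcave.congr fun x hx => ?_
  exact (toReal_measure_abs_le_eq_intervalIntegral hε hfmeas hfnonneg hdensity hx).symm
end

section
/- For every a ∈ ℝ, ∫_0^∞ ( e^{−(x−a)²/2} + e^{−(x+a)²/2} − 2 e^{−x²/2} ) · Erf(x/√2) dx = √2 · ∫_0^∞ e^{−t²} ( 2 Erf(t) − Erf(t − a/√2) − Erf(t + a/√2) ) dt. -/
/-! Substituting `x = √2 t` turns the left side into
`√2 ∫_0^∞ (g(t-b) + g(t+b) - 2g(t)) Erf(t) dt` with `g(t) = e^{-t²}` and `b = a/√2`.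
As `Erf' = (2/√π) g`, integrating by parts against `v = Erf(· - b) + Erf(· + b) - 2 Erf`
moves the derivative onto `Erf`; the boundary terms vanish because `Erf 0 = 0` and
`v → 1 + 1 - 2 = 0` at infinity. -/

open MeasureTheory

/-- The Gauss error function `Erf(t) = (2/√π) ∫_0^t e^{-u²} du`
(automatically odd: `Erf(-t) = -Erf(t)`). -/
noncomputable def erf (t : ℝ) : ℝ := (2 / Real.sqrt Real.pi) * ∫ u in (0:ℝ)..t, Real.exp (-u ^ 2)

open Filter Set Topology

theorem norm_intervalIntegral_le_integral_norm {E : Type*} [NormedAddCommGroup E]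
    [NormedSpace ℝ E] {g : ℝ → E} (hg : Integrable g) (a b : ℝ) :
    ‖∫ u in a..b, g u‖ ≤ ∫ u, ‖g u‖ :=
  intervalIntegral.norm_integral_le_integral_norm_uIoc.trans
    (setIntegral_le_integral hg.norm (ae_of_all _ fun _ => norm_nonneg _))

theorem integral_Ioi_secondDiff_deriv_mul_eq {G g : ℝ → ℝ} {C L : ℝ}
    (hG : ∀ t, HasDerivAt G (g t) t) (hg : Integrable g) (hG0 : G 0 = 0)
    (hGC : ∀ t, |G t| ≤ C) (hGL : Tendsto G atTop (𝓝 L)) (b : ℝ) :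
    ∫ t in Ioi 0, (g (t - b) + g (t + b) - 2 * g t) * G t
      = ∫ t in Ioi 0, g t * (2 * G t - G (t - b) - G (t + b)) := by
  set V : ℝ → ℝ := fun t => G (t - b) + G (t + b) - 2 * G t
  have hV : ∀ t, HasDerivAt V (g (t - b) + g (t + b) - 2 * g t) t := fun t =>
    ((((hG _).comp_sub_const t b).add ((hG _).comp_add_const t b)).sub ((hG t).const_mul 2))
  have hGc : Continuous G := continuous_iff_continuousAt.2 fun t => (hG t).continuousAt
  have hVc : Continuous V := continuous_iff_continuousAt.2 fun t => (hV t).continuousAt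
  have hVC : ∀ t, ‖V t‖ ≤ 4 * C := fun t => by
    have habs_two_mul : |2 * G t| = 2 * |G t| := by rw [abs_mul, abs_two]
    rw [Real.norm_eq_abs]
    linarith [abs_sub (G (t - b) + G (t + b)) (2 * G t), abs_add_le (G (t - b)) (G (t + b)),
      hGC t, hGC (t - b), hGC (t + b)]
  have hV_top : Tendsto V atTop (𝓝 0) := by
    have := ((hGL.comp (tendsto_atTop_add_const_right _ (-b) tendsto_id)).add
      (hGL.comp (tendsto_atTop_add_const_right _ b tendsto_id))).sub (hGL.const_mul 2)
    simpa [V, Function.comp_def, sub_eq_add_neg, two_mul] using this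
  have hGV_zero : Tendsto (G * V) (𝓝[>] 0) (𝓝 0) := by
    simpa [hG0] using ((hGc.mul hVc).tendsto 0).mono_left nhdsWithin_le_nhds
  have hGV_top : Tendsto (G * V) atTop (𝓝 0) := by
    have := hGL.mul hV_top
    rwa [mul_zero] at this
  have hsecond : Integrable fun t => g (t - b) + g (t + b) - 2 * g t :=
    ((hg.comp_sub_right b).add (hg.comp_add_right b)).sub (hg.const_mul 2)
  have parts := integral_Ioi_mul_deriv_eq_deriv_mul (fun t _ => hG t) (fun t _ => hV t)
    (hsecond.bdd_mul hGc.aestronglyMeasurable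
      (ae_of_all _ fun t => (hGC t : ‖G t‖ ≤ C))).integrableOn
    (hg.mul_bdd hVc.aestronglyMeasurable (ae_of_all _ hVC)).integrableOn
    hGV_zero hGV_top
  rw [sub_self, zero_sub, ← integral_neg] at parts
  simp only [mul_comm _ (G _)]
  rw [parts]
  congr 1 with t
  ring

theorem integrable_exp_neg_sq : Integrable fun u : ℝ => Real.exp (-u ^ 2) := by
  simpa using integrable_exp_neg_mul_sq one_pos

theorem hasDerivAt_erf (t : ℝ) :
    HasDerivAt erf (2 / Real.sqrt Real.pi * Real.exp (-t ^ 2)) t :=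
  ((by fun_prop : Continuous fun u : ℝ => Real.exp (-u ^ 2)).integral_hasStrictDerivAt 0 t
    |>.hasDerivAt).const_mul _

theorem erf_zero : erf 0 = 0 := by
  simp [erf]

theorem abs_erf_le (t : ℝ) :
    |erf t| ≤ 2 / Real.sqrt Real.pi * ∫ u, ‖Real.exp (-u ^ 2)‖ := by
  rw [erf, abs_mul, abs_of_pos (by positivity)]
  gcongr
  exact norm_intervalIntegral_le_integral_norm integrable_exp_neg_sq 0 t

theorem tendsto_erf_atTop : Tendsto erf atTop (𝓝 1) := by
  have := (intervalIntegral_tendsto_integral_Ioi 0 integrable_exp_neg_sq.integrableOn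
    tendsto_id).const_mul (2 / Real.sqrt Real.pi)
  have hgauss : ∫ u in Ioi 0, Real.exp (-u ^ 2) = Real.sqrt Real.pi / 2 := by
    simpa using integral_gaussian_Ioi 1
  have hone : 2 / Real.sqrt Real.pi * (Real.sqrt Real.pi / 2) = 1 := by
    field_simp
  rwa [hgauss, hone] at this

theorem integral_Ioi_gaussSecondDiff_mul_erf (b : ℝ) :
    ∫ t in Ioi 0, (Real.exp (-(t - b) ^ 2) + Real.exp (-(t + b) ^ 2)
        - 2 * Real.exp (-t ^ 2)) * erf t
      = ∫ t in Ioi 0, Real.exp (-t ^ 2) * (2 * erf t - erf (t - b) - erf (t + b)) := by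
  have h := integral_Ioi_secondDiff_deriv_mul_eq hasDerivAt_erf
    (integrable_exp_neg_sq.const_mul _) erf_zero abs_erf_le tendsto_erf_atTop b
  set c := 2 / Real.sqrt Real.pi
  have hc : c ≠ 0 := by positivity
  have hl (t : ℝ) : (c * Real.exp (-(t - b) ^ 2) + c * Real.exp (-(t + b) ^ 2)
      - 2 * (c * Real.exp (-t ^ 2))) * erf t = c * ((Real.exp (-(t - b) ^ 2)
        + Real.exp (-(t + b) ^ 2) - 2 * Real.exp (-t ^ 2)) * erf t) := by ring
  simp only [hl, mul_assoc c, integral_const_mul] at h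
  exact mul_left_cancel₀ hc h

theorem neg_sqrt_two_mul_sq_div_two (x : ℝ) : -(Real.sqrt 2 * x) ^ 2 / 2 = -x ^ 2 := by
  rw [mul_pow, Real.sq_sqrt zero_le_two]
  ring

/-- For every `a : ℝ`,
`∫_0^∞ (e^{-(x-a)²/2} + e^{-(x+a)²/2} - 2e^{-x²/2}) · Erf(x/√2) dx
  = √2 · ∫_0^∞ e^{-t²} (2 Erf(t) - Erf(t - a/√2) - Erf(t + a/√2)) dt`. -/
theorem stmt_14 (a : ℝ) :
    ∫ x in Set.Ioi (0:ℝ),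
        (Real.exp (-(x - a) ^ 2 / 2) + Real.exp (-(x + a) ^ 2 / 2)
            - 2 * Real.exp (-x ^ 2 / 2)) * erf (x / Real.sqrt 2)
      = Real.sqrt 2 * ∫ t in Set.Ioi (0:ℝ),
          Real.exp (-t ^ 2) *
            (2 * erf t - erf (t - a / Real.sqrt 2) - erf (t + a / Real.sqrt 2)) := by
  have hs : 0 < Real.sqrt 2 := by positivity
  have hsubst (x : ℝ) :
      (Real.exp (-(Real.sqrt 2 * x - a) ^ 2 / 2) + Real.exp (-(Real.sqrt 2 * x + a) ^ 2 / 2)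
        - 2 * Real.exp (-(Real.sqrt 2 * x) ^ 2 / 2)) * erf (Real.sqrt 2 * x / Real.sqrt 2)
      = (Real.exp (-(x - a / Real.sqrt 2) ^ 2) + Real.exp (-(x + a / Real.sqrt 2) ^ 2)
        - 2 * Real.exp (-x ^ 2)) * erf x := by
    have hsub : Real.sqrt 2 * x - a = Real.sqrt 2 * (x - a / Real.sqrt 2) := by field_simp
    have hadd : Real.sqrt 2 * x + a = Real.sqrt 2 * (x + a / Real.sqrt 2) := by field_simp
    rw [hsub, hadd, neg_sqrt_two_mul_sq_div_two, neg_sqrt_two_mul_sq_div_two,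
      neg_sqrt_two_mul_sq_div_two, mul_div_cancel_left₀ _ hs.ne']
  calc _ = Real.sqrt 2 * ∫ x in Ioi 0,
        (Real.exp (-(Real.sqrt 2 * x - a) ^ 2 / 2) + Real.exp (-(Real.sqrt 2 * x + a) ^ 2 / 2)
          - 2 * Real.exp (-(Real.sqrt 2 * x) ^ 2 / 2)) * erf (Real.sqrt 2 * x / Real.sqrt 2) := by
        rw [integral_comp_mul_left_Ioi (fun x => (Real.exp (-(x - a) ^ 2 / 2)
          + Real.exp (-(x + a) ^ 2 / 2) - 2 * Real.exp (-x ^ 2 / 2)) * erf (x / Real.sqrt 2)) 0 hs,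
          mul_zero, smul_eq_mul, mul_inv_cancel_left₀ hs.ne']
    _ = _ := by simp only [hsubst, integral_Ioi_gaussSecondDiff_mul_erf]
end
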